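/- For all integers n ≥ 3 and 2 ≤ K ≤ n: every ratio-cut vector of a partition of [n] into at most K nonempty clusters is an extreme point of RMet^K_n, and every ratio-cut vector of a partition of [n] into exactly K nonempty clusters is an extreme point of RMet^{=K}_n. -/

import Mathlib

/-- Index set for the pairs `1 ≤ i < j ≤ n`. -/
abbrev PairIdx (n : ℕ) := {p : Fin n × Fin n // p.1 < p.2}

/-- The space `ℝ^{n(n-1)/2}` of vectors indexed by pairs `i < j`. -/
abbrev CutSpace (n : ℕ) := PairIdx n → ℝ

/-- The ratio-cut vector of the partition of `[n]` induced by the cluster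
assignment `c : Fin n → Fin K` (such assignments describe exactly the partitions
of `[n]` into at most `K` nonempty clusters): the entry at a pair `i < j` is
`1/|Γ|` if `i, j` lie in the same cluster `Γ` and `0` otherwise. -/
noncomputable def cutVec (n K : ℕ) (c : Fin n → Fin K) : CutSpace n := fun p =>
  if c p.1.1 = c p.1.2 then
    (1 : ℝ) / ((Finset.univ.filter fun i => c i = c p.1.1).card : ℝ)
  else 0

/-- The ratio-cut polytope `RCut^K_n`: convex hull of the ratio-cut vectors of all
partitions of `[n]` into at most `K` nonempty clusters. -/
def RCut (n K : ℕ) : Set (CutSpace n) :=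
  convexHull ℝ {X | ∃ c : Fin n → Fin K, X = cutVec n K c}

/-- `RCut^{=K}_n`: convex hull of the ratio-cut vectors of all partitions of `[n]`
into exactly `K` nonempty clusters (i.e. surjective cluster assignments). -/
def RCutEq (n K : ℕ) : Set (CutSpace n) :=
  convexHull ℝ {X | ∃ c : Fin n → Fin K, Function.Surjective c ∧ X = cutVec n K c}

/-- Symmetric entry access: `ent X i j = X_{ij}` for `i ≠ j`, with `X_{ji} = X_{ij}`. -/
noncomputable def ent {n : ℕ} (X : CutSpace n) (i j : Fin n) : ℝ :=
  if h : i < j then X ⟨(i, j), h⟩ else if h' : j < i then X ⟨(j, i), h'⟩ else 0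

/-- `∑_{i,j ∈ T, i < j} X_{ij}`. -/
noncomputable def pairSumOn {n : ℕ} (X : CutSpace n) (T : Finset (Fin n)) : ℝ :=
  ∑ p : PairIdx n, if p.1.1 ∈ T ∧ p.1.2 ∈ T then X p else 0

/-- The polyhedral relaxation `RMet^K_n` of the ratio-cut polytope, cut out by the
facet-defining inequalities of Propositions 2-4 of the paper. -/
def RMet (n K : ℕ) : Set (CutSpace n) :=
  {X | ((n : ℝ) - K) / 2 ≤ ∑ p : PairIdx n, X p ∧
    (∀ l : Fin n, ∀ T : Finset (Fin n), l ∉ T → 2 ≤ T.card → T.card ≤ K →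
      2 * ∑ j ∈ T, ent X l j + ∑ j ∈ Finset.univ \ insert l T, ent X l j
        ≤ 1 + pairSumOn X T) ∧
    ∀ p : PairIdx n, 0 ≤ X p}

/-- The polyhedral relaxation `RMet^{=K}_n`: same constraints as `RMet^K_n` with the
first inequality replaced by an equality. -/
def RMetEq (n K : ℕ) : Set (CutSpace n) :=
  {X | (∑ p : PairIdx n, X p = ((n : ℝ) - K) / 2) ∧
    (∀ l : Fin n, ∀ T : Finset (Fin n), l ∉ T → 2 ≤ T.card → T.card ≤ K →
      2 * ∑ j ∈ T, ent X l j + ∑ j ∈ Finset.univ \ insert l T, ent X l j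
        ≤ 1 + pairSumOn X T) ∧
    ∀ p : PairIdx n, 0 ≤ X p}

/-!
Both polytopes lie in the polyhedron `RMetIneq n K` cut out by the constraints (ii) and (iii)
alone, so it suffices to show that a ratio-cut vector `X` is a vertex of it. At `X`, the
constraint (ii) for `l` and `T` follows from `(t - 1) (t - 2) ≥ 0`, where `t` counts the points
of `T` in the cluster `Γ` of `l`. If `X` lies in the open segment between two points `Y`, `Z` of the
polyhedron, every constraint tight at `X` is tight at `Y`. Nonnegativity makes `Y` vanish across
clusters. For `l ≠ u` in `Γ` and any third point `v`, the constraint (ii) for `l` and `T = {u, v}`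
is tight at `X`; adding its instances for `(l, u)` and `(u, l)` gives `2 Y_lu + R_l + R_u = 2`,
where `R_l` is the row sum of `Y` inside `Γ`, and this linear system forces `Y_lu = 1 / |Γ|`.
-/

open Finset

lemma eq_of_mul_add_mul_eq_of_le {a b u u' v v' : ℝ} (ha : 0 < a) (hb : 0 ≤ b)
    (hu : u ≤ u') (hv : v ≤ v') (h : a * u + b * v = a * u' + b * v') : u = u' :=
  le_antisymm hu <| by nlinarith [mul_le_mul_of_nonneg_left hv hb]

lemma two_mul_sum_add_sum_sdiff_insert {α : Type*} [Fintype α] [DecidableEq α] (f : α → ℝ)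
    {l : α} {T : Finset α} (hl : l ∉ T) (hf : f l = 0) :
    2 * ∑ j ∈ T, f j + ∑ j ∈ univ \ insert l T, f j = ∑ j ∈ T, f j + ∑ j, f j := by
  rw [← sum_sdiff (subset_univ (insert l T)), sum_insert hl, hf]
  ring

lemma sum_inv_card_fiber_eq_card_image {α β : Type*} [Fintype α] [DecidableEq β] (f : α → β) :
    ∑ a, 1 / (#{x | f x = f a} : ℝ) = #(univ.image f) := by
  rw [← sum_fiberwise_of_maps_to (g := f) (fun a _ => mem_image_of_mem f (mem_univ a)),
    card_eq_sum_ones, Nat.cast_sum]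
  refine sum_congr rfl fun b hb => ?_
  obtain ⟨a, -, rfl⟩ := mem_image.1 hb
  have hpos : (0 : ℝ) < #{x | f x = f a} := by exact_mod_cast card_pos.2 ⟨a, by simp⟩
  rw [sum_congr rfl fun x hx => by rw [(mem_filter.1 hx).2], sum_const, nsmul_eq_mul]
  field_simp
  simp

section Entries

variable {n : ℕ}

lemma ent_of_lt (Y : CutSpace n) {i j : Fin n} (h : i < j) : ent Y i j = Y ⟨(i, j), h⟩ := by
  simp [ent, h]

lemma ent_comm (Y : CutSpace n) (i j : Fin n) : ent Y i j = ent Y j i := by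
  rcases lt_trichotomy i j with h | rfl | h
  · simp [ent, h, h.not_gt]
  · rfl
  · simp [ent, h, h.not_gt]

lemma ent_self (Y : CutSpace n) (i : Fin n) : ent Y i i = 0 := by
  simp [ent]

lemma ent_nonneg {Y : CutSpace n} (hY : ∀ p, 0 ≤ Y p) (i j : Fin n) : 0 ≤ ent Y i j := by
  unfold ent
  split_ifs <;> simp [hY]

lemma ent_smul_add_smul (a b : ℝ) (Y Z : CutSpace n) (i j : Fin n) :
    ent (a • Y + b • Z) i j = a * ent Y i j + b * ent Z i j := by
  unfold ent
  split_ifs <;> simp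

lemma sum_pairIdx_eq_half_sum (f : Fin n → Fin n → ℝ) (hf : ∀ i j, f i j = f j i)
    (hf₀ : ∀ i, f i i = 0) :
    ∑ p : PairIdx n, f p.1.1 p.1.2 = (∑ i, ∑ j, f i j) / 2 := by
  have hsplit : ∀ i j, f i j = (if i < j then f i j else 0) + if j < i then f j i else 0 := by
    intro i j
    rcases lt_trichotomy i j with h | rfl | h
    · simp [h, h.not_gt]
    · simp [hf₀]
    · simp [h, h.not_gt, hf i j]
  have hsub : ∑ p : PairIdx n, f p.1.1 p.1.2 = ∑ i, ∑ j, if i < j then f i j else 0 := by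
    rw [← Fintype.sum_prod_type', ← sum_filter]
    exact (sum_subtype _ (by simp) fun q : Fin n × Fin n => f q.1 q.2).symm
  rw [sum_congr rfl fun i _ => sum_congr rfl fun j _ => hsplit i j]
  simp only [sum_add_distrib]
  rw [sum_comm (f := fun i j => if j < i then f j i else 0), hsub]
  ring

lemma sum_eq_half_sum_ent (Y : CutSpace n) : ∑ p, Y p = (∑ i, ∑ j, ent Y i j) / 2 := by
  rw [← sum_pairIdx_eq_half_sum _ (ent_comm Y) (ent_self Y)]
  exact sum_congr rfl fun p _ => (ent_of_lt Y p.2).symm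

lemma pairSumOn_eq_half_sum (Y : CutSpace n) (T : Finset (Fin n)) :
    pairSumOn Y T = (∑ i ∈ T, ∑ j ∈ T, ent Y i j) / 2 := by
  have h := sum_pairIdx_eq_half_sum (fun i j => if i ∈ T ∧ j ∈ T then ent Y i j else 0)
    (fun i j => by simp only [and_comm, ent_comm Y i j]) (fun i => by simp [ent_self])
  unfold pairSumOn
  convert h using 1
  · exact sum_congr rfl fun p _ => by rw [ent_of_lt Y p.2]
  · simp [ite_and, sum_ite_mem]

lemma pairSumOn_pair (Y : CutSpace n) {i j : Fin n} (hij : i ≠ j) :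
    pairSumOn Y {i, j} = ent Y i j := by
  rw [pairSumOn_eq_half_sum, sum_pair hij, sum_pair hij, sum_pair hij, ent_self, ent_self,
    ent_comm Y j i]
  ring

end Entries

def RMetIneq (n K : ℕ) : Set (CutSpace n) :=
  {X | (∀ l : Fin n, ∀ T : Finset (Fin n), l ∉ T → 2 ≤ T.card → T.card ≤ K →
      2 * ∑ j ∈ T, ent X l j + ∑ j ∈ Finset.univ \ insert l T, ent X l j
        ≤ 1 + pairSumOn X T) ∧
    ∀ p : PairIdx n, 0 ≤ X p}

section RMetIneq

variable {n K : ℕ}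

lemma RMet_subset_RMetIneq : RMet n K ⊆ RMetIneq n K := fun _ hX => hX.2

lemma RMetEq_subset_RMetIneq : RMetEq n K ⊆ RMetIneq n K := fun _ hX => hX.2

lemma ent_add_ent_add_sum_ent_le {Y : CutSpace n} (hY : Y ∈ RMetIneq n K) (hK : 2 ≤ K)
    {l u v : Fin n} (hlu : l ≠ u) (hlv : l ≠ v) (huv : u ≠ v) :
    ent Y l u + ent Y l v + ∑ j, ent Y l j ≤ 1 + ent Y u v := by
  have hl : l ∉ ({u, v} : Finset (Fin n)) := by simp [hlu, hlv]
  have h := hY.1 l {u, v} hl (card_pair huv).ge (by rwa [card_pair huv])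
  rwa [two_mul_sum_add_sum_sdiff_insert _ hl (ent_self Y l), sum_pair huv,
    pairSumOn_pair Y huv] at h

end RMetIneq

section Clusters

variable {n K : ℕ} (c : Fin n → Fin K)

def cluster (i : Fin n) : Finset (Fin n) := {x | c x = c i}

lemma mem_cluster {i j : Fin n} : j ∈ cluster c i ↔ c j = c i := by
  simp [cluster]

lemma cluster_eq_of_eq {i j : Fin n} (h : c i = c j) : cluster c i = cluster c j := by
  simp [cluster, h]

lemma card_cluster_pos (i : Fin n) : 0 < #(cluster c i) :=
  card_pos.2 ⟨i, (mem_cluster c).2 rfl⟩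

lemma ent_cutVec {i j : Fin n} (hij : i ≠ j) :
    ent (cutVec n K c) i j = if c i = c j then 1 / (#(cluster c i) : ℝ) else 0 := by
  rcases hij.lt_or_gt with h | h
  · simp [ent, cutVec, cluster, h]
  · by_cases hc : c i = c j
    · simp [ent, cutVec, cluster, h, h.not_gt, hc]
    · simp [ent, cutVec, h, h.not_gt, hc, Ne.symm hc]

lemma cutVec_nonneg (p : PairIdx n) : 0 ≤ cutVec n K c p := by
  unfold cutVec
  split_ifs <;> positivity

lemma sum_ent_cutVec {l : Fin n} {S : Finset (Fin n)} (hl : l ∉ S) :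
    ∑ j ∈ S, ent (cutVec n K c) l j = #{j ∈ S | c l = c j} / (#(cluster c l) : ℝ) := by
  rw [sum_congr rfl fun j hj => ent_cutVec c (ne_of_mem_of_not_mem hj hl).symm, ← sum_filter,
    sum_const, nsmul_eq_mul, mul_one_div]

lemma sum_ent_cutVec_univ (l : Fin n) :
    ∑ j, ent (cutVec n K c) l j = 1 - 1 / (#(cluster c l) : ℝ) := by
  have hcard : #{j ∈ univ.erase l | c l = c j} + 1 = #(cluster c l) := by
    rw [filter_erase, card_erase_add_one (by simp)]
    simp only [cluster, eq_comm]
  rw [← add_sum_erase _ _ (mem_univ l), ent_self, zero_add,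
    sum_ent_cutVec c (notMem_erase l _), ← hcard]
  have : (0 : ℝ) < #{j ∈ univ.erase l | c l = c j} + 1 := by positivity
  push_cast
  field_simp
  ring

lemma sum_cutVec : ∑ p, cutVec n K c p = ((n : ℝ) - #(univ.image c)) / 2 := by
  rw [sum_eq_half_sum_ent, sum_congr rfl fun l _ => sum_ent_cutVec_univ c l, sum_sub_distrib,
    ← sum_inv_card_fiber_eq_card_image c]
  simp [cluster]

lemma le_pairSumOn_cutVec (l : Fin n) (T : Finset (Fin n)) :
    (#{j ∈ T | c l = c j} : ℝ) * (#{j ∈ T | c l = c j} - 1) / (2 * #(cluster c l))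
      ≤ pairSumOn (cutVec n K c) T := by
  set T' := {j ∈ T | c l = c j}
  have hrow : ∀ i ∈ T', ∑ j ∈ T', ent (cutVec n K c) i j = (#T' - 1) / (#(cluster c l) : ℝ) := by
    intro i hi
    have hci : c l = c i := (mem_filter.1 hi).2
    have hall : {j ∈ T'.erase i | c i = c j} = T'.erase i :=
      filter_true_of_mem fun j hj => hci ▸ (mem_filter.1 (mem_of_mem_erase hj)).2
    rw [← add_sum_erase _ _ hi, ent_self, zero_add, sum_ent_cutVec c (notMem_erase i _), hall,
      card_erase_of_mem hi, cluster_eq_of_eq c hci.symm, Nat.cast_pred (card_pos.2 ⟨i, hi⟩)]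
  have hnonneg : ∀ i j, 0 ≤ ent (cutVec n K c) i j := ent_nonneg (cutVec_nonneg c)
  calc (#T' : ℝ) * (#T' - 1) / (2 * #(cluster c l))
      = (∑ i ∈ T', ∑ j ∈ T', ent (cutVec n K c) i j) / 2 := by
        rw [sum_congr rfl hrow, sum_const, nsmul_eq_mul]
        ring
    _ ≤ (∑ i ∈ T', ∑ j ∈ T, ent (cutVec n K c) i j) / 2 := by
        gcongr ?_ / 2
        exact sum_le_sum fun i _ =>
          sum_le_sum_of_subset_of_nonneg (filter_subset _ T) fun j _ _ => hnonneg i j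
    _ ≤ (∑ i ∈ T, ∑ j ∈ T, ent (cutVec n K c) i j) / 2 := by
        gcongr ?_ / 2
        exact sum_le_sum_of_subset_of_nonneg (filter_subset _ T) fun i _ _ =>
          sum_nonneg fun j _ => hnonneg i j
    _ = pairSumOn (cutVec n K c) T := (pairSumOn_eq_half_sum _ T).symm

lemma two_mul_sum_ent_cutVec_add_sum_le {l : Fin n} {T : Finset (Fin n)} (hl : l ∉ T) :
    2 * ∑ j ∈ T, ent (cutVec n K c) l j + ∑ j ∈ univ \ insert l T, ent (cutVec n K c) l j
      ≤ 1 + pairSumOn (cutVec n K c) T := by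
  rw [two_mul_sum_add_sum_sdiff_insert _ hl (ent_self _ l), sum_ent_cutVec c hl,
    sum_ent_cutVec_univ]
  have hpair := le_pairSumOn_cutVec c l T
  set t : ℕ := #{j ∈ T | c l = c j}
  have hm : (0 : ℝ) < #(cluster c l) := by exact_mod_cast card_cluster_pos c l
  have ht : (0 : ℝ) ≤ (t - 1) * (t - 2) := by
    rcases t with _ | _ | t
    · norm_num
    · norm_num
    · push_cast
      nlinarith
  have : 1 + t * (t - 1) / (2 * #(cluster c l)) - (t / #(cluster c l) + (1 - 1 / #(cluster c l)))
      = (t - 1) * (t - 2) / (2 * (#(cluster c l) : ℝ)) := by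
    field_simp
    ring
  linarith [div_nonneg ht (by positivity : (0 : ℝ) ≤ 2 * #(cluster c l))]

lemma cutVec_mem_RMetIneq : cutVec n K c ∈ RMetIneq n K :=
  ⟨fun _ _ hl _ _ => two_mul_sum_ent_cutVec_add_sum_le c hl, cutVec_nonneg c⟩

lemma ent_add_ent_add_sum_ent_cutVec {l u v : Fin n} (hlu : l ≠ u) (hlv : l ≠ v) (huv : u ≠ v)
    (hc : c l = c u) :
    ent (cutVec n K c) l u + ent (cutVec n K c) l v + ∑ j, ent (cutVec n K c) l j
      = 1 + ent (cutVec n K c) u v := by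
  have hm : (0 : ℝ) < #(cluster c l) := by exact_mod_cast card_cluster_pos c l
  rw [ent_cutVec c hlu, ent_cutVec c hlv, ent_cutVec c huv, sum_ent_cutVec_univ,
    cluster_eq_of_eq c hc.symm, if_pos hc, ← hc]
  split_ifs
  · field_simp; ring
  · ring

end Clusters

lemma eq_one_div_card_of_two_mul_add_sum_erase {α : Type*} [DecidableEq α] {F : Finset α}
    {y : α → α → ℝ}
    (h : ∀ l ∈ F, ∀ u ∈ F, l ≠ u →
      2 * y l u + ∑ r ∈ F.erase l, y l r + ∑ r ∈ F.erase u, y u r = 2)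
    {l u : α} (hl : l ∈ F) (hu : u ∈ F) (hlu : l ≠ u) : y l u = 1 / #F := by
  set S : α → ℝ := fun l => ∑ r ∈ F.erase l, y l r
  have hm : (0 : ℝ) < #F := by exact_mod_cast card_pos.2 ⟨l, hl⟩
  -- Summing the equations for a fixed `l` over `u` expresses `S l` through the total `∑ S`.
  have hrow : ∀ l ∈ F, #F * S l = 2 * (#F - 1) - ∑ k ∈ F, S k := by
    intro l hl
    have hexpand : S l = ∑ u ∈ F.erase l, (2 - S l - S u) / 2 :=
      sum_congr rfl fun u hu => by
        linarith [h l hl u (mem_of_mem_erase hu) (ne_of_mem_erase hu).symm]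
    rw [← sum_div, sum_sub_distrib, sum_sub_distrib, sum_const, sum_const, card_erase_of_mem hl,
      sum_erase_eq_sub hl, nsmul_eq_mul, nsmul_eq_mul, Nat.cast_pred (card_pos.2 ⟨l, hl⟩)]
      at hexpand
    linarith
  have htotal : ∑ k ∈ F, S k = #F - 1 := by
    have := sum_congr rfl hrow
    rw [← mul_sum, sum_const, nsmul_eq_mul] at this
    nlinarith
  have hSl := hrow l hl
  have hSu := hrow u hu
  have := h l hl u hu hlu
  field_simp
  nlinarith

lemma eq_cutVec_of_ent_add_ent_add_sum_ent_eq {n K : ℕ} (hn : 3 ≤ n) (c : Fin n → Fin K)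
    {Y : CutSpace n} (hoff : ∀ i j, c i ≠ c j → ent Y i j = 0)
    (htight : ∀ l u v, l ≠ u → l ≠ v → u ≠ v → c l = c u →
      ent Y l u + ent Y l v + ∑ j, ent Y l j = 1 + ent Y u v) :
    Y = cutVec n K c := by
  have hthird : ∀ l u : Fin n, ∃ v, l ≠ v ∧ u ≠ v := by
    intro l u
    have : #({l, u} : Finset (Fin n)) < #(univ : Finset (Fin n)) := by
      simpa using (card_le_two (a := l) (b := u)).trans_lt (by omega)
    obtain ⟨v, -, hv⟩ := exists_mem_notMem_of_card_lt_card this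
    exact ⟨v, by simp_all [eq_comm]⟩
  have hcluster : ∀ l u, l ≠ u → c l = c u → ent Y l u = 1 / #(cluster c l) := by
    intro l u hlu hc
    have hrow : ∀ k ∈ cluster c l, ∑ j, ent Y k j = ∑ j ∈ (cluster c l).erase k, ent Y k j := by
      intro k hk
      refine (sum_subset (subset_univ _) fun j _ hj => ?_).symm
      rcases eq_or_ne k j with rfl | hkj
      · exact ent_self Y k
      · refine hoff k j fun hcj => hj (mem_erase.2 ⟨hkj.symm, (mem_cluster c).2 ?_⟩)
        rw [← hcj]
        exact (mem_cluster c).1 hk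
    refine eq_one_div_card_of_two_mul_add_sum_erase (fun l' hl' u' hu' hlu' => ?_)
      ((mem_cluster c).2 rfl) ((mem_cluster c).2 hc.symm) hlu
    obtain ⟨v, hl'v, hu'v⟩ := hthird l' u'
    have hc' : c l' = c u' := ((mem_cluster c).1 hl').trans ((mem_cluster c).1 hu').symm
    have h₁ := htight l' u' v hlu' hl'v hu'v hc'
    have h₂ := htight u' l' v hlu'.symm hu'v hl'v hc'.symm
    rw [hrow l' hl', ent_comm Y u' v] at h₁
    rw [hrow u' hu', ent_comm Y u' l', ent_comm Y u' v] at h₂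
    linarith
  ext ⟨⟨i, j⟩, hij⟩
  rw [← ent_of_lt Y hij, ← ent_of_lt (cutVec n K c) hij, ent_cutVec c hij.ne]
  split_ifs with hc
  · exact hcluster i j hij.ne hc
  · exact hoff i j hc

theorem cutVec_mem_extremePoints_RMetIneq {n K : ℕ} (hn : 3 ≤ n) (hK : 2 ≤ K)
    (c : Fin n → Fin K) : cutVec n K c ∈ (RMetIneq n K).extremePoints ℝ := by
  refine mem_extremePoints_iff_left.2 ⟨cutVec_mem_RMetIneq c, ?_⟩
  rintro Y hY Z hZ ⟨a, b, ha, hb, hab, hX⟩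
  have hent : ∀ i j, ent (cutVec n K c) i j = a * ent Y i j + b * ent Z i j := fun i j => by
    rw [← hX, ent_smul_add_smul]
  refine eq_cutVec_of_ent_add_ent_add_sum_ent_eq hn c (fun i j hc => ?_)
    (fun l u v hlu hlv huv hc => ?_)
  · have hij : i ≠ j := fun h => hc (congrArg c h)
    refine (eq_of_mul_add_mul_eq_of_le ha hb.le (ent_nonneg hY.2 i j) (ent_nonneg hZ.2 i j)
      ?_).symm
    rw [← hent, ent_cutVec c hij, if_neg hc]
    ring
  · refine eq_of_mul_add_mul_eq_of_le ha hb.le (ent_add_ent_add_sum_ent_le hY hK hlu hlv huv)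
      (ent_add_ent_add_sum_ent_le hZ hK hlu hlv huv) ?_
    have h := ent_add_ent_add_sum_ent_cutVec c hlu hlv huv hc
    simp only [hent, sum_add_distrib, ← mul_sum] at h
    linear_combination h - hab

theorem stmt9_general (n K : ℕ) (hn : 3 ≤ n) (hK2 : 2 ≤ K) :
    (∀ c : Fin n → Fin K, cutVec n K c ∈ Set.extremePoints ℝ (RMet n K)) ∧
    (∀ c : Fin n → Fin K, Function.Surjective c →
      cutVec n K c ∈ Set.extremePoints ℝ (RMetEq n K)) := by
  refine ⟨fun c => ?_, fun c hc => ?_⟩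
  · refine inter_extremePoints_subset_extremePoints_of_subset RMet_subset_RMetIneq
      ⟨⟨?_, cutVec_mem_RMetIneq c⟩, cutVec_mem_extremePoints_RMetIneq hn hK2 c⟩
    rw [sum_cutVec]
    have : #(univ.image c) ≤ K := card_le_univ _ |>.trans_eq (Fintype.card_fin K)
    gcongr
  · refine inter_extremePoints_subset_extremePoints_of_subset RMetEq_subset_RMetIneq
      ⟨⟨?_, cutVec_mem_RMetIneq c⟩, cutVec_mem_extremePoints_RMetIneq hn hK2 c⟩
    rw [sum_cutVec, image_univ_of_surjective hc, card_univ, Fintype.card_fin]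

/-- every ratio-cut vector of a partition of [n] into at most K
nonempty clusters is a vertex (extreme point) of RMet^K_n, and every ratio-cut
vector of a partition into exactly K nonempty clusters is a vertex of
RMet^{=K}_n. -/
theorem stmt9 (n K : ℕ) (hn : 3 ≤ n) (hK2 : 2 ≤ K) (hKn : K ≤ n) :
    (∀ c : Fin n → Fin K, cutVec n K c ∈ Set.extremePoints ℝ (RMet n K)) ∧
    (∀ c : Fin n → Fin K, Function.Surjective c →
      cutVec n K c ∈ Set.extremePoints ℝ (RMetEq n K)) :=
  stmt9_general n K hn hK2
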